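/- Let IP_∞ be an invariant probability measure for the environment process (T^{X_n}ω). For k ≤ 0 write IP_∞^{k,≪} for the absolutely continuous part of IP_∞ restricted to S_k relative to IP restricted to S_k, and define IP_∞^{∞,≪}(A) = inf_{j≤k} IP_∞^{j,≪}(A) for A ∈ S_k. If IP_∞^{∞,≪}(Ω) > 0, then the normalized measure \hat{IP}_∞ = IP_∞^{∞,≪}(Ω)^{-1} IP_∞^{∞,≪} is an invariant probability measure for the environment process, and it is absolutely continuous with respect to IP on every half-space sigma-field S_k, k ≤ 0. -/

import Mathlib

open MeasureTheory Filter Set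
open scoped ENNReal

noncomputable section

abbrev Zd (d : ℕ) := Fin d → ℤ
abbrev Env (d : ℕ) := Zd d → Zd d → ℝ
abbrev Traj (d : ℕ) := ℕ → Zd d

/-- shift of the environment by `k`: `(T^k ω) x e = ω (k+x) e`. -/
def shiftE {d : ℕ} (k : Zd d) (ω : Env d) : Env d := fun x e => ω (k + x) e

/-- the sup-norm ball of radius `M` in `ℤ^d`, the set of admissible jumps. -/
def box (d M : ℕ) : Finset (Zd d) := Finset.Icc (fun _ => -(M : ℤ)) (fun _ => (M : ℤ))

/-- scalar product `x · ℓ`. -/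
def dotl {d : ℕ} (x : Zd d) (ℓ : Fin d → ℝ) : ℝ := ∑ i, (x i : ℝ) * ℓ i

/-- the local drift in direction `ℓ`: `D(ω)·ℓ`. -/
def driftl {d : ℕ} (M : ℕ) (ℓ : Fin d → ℝ) (ω : Env d) : ℝ :=
  ∑ e ∈ box d M, dotl e ℓ * ω 0 e

/-- `μ` is the law of the quenched walk in environment `ω` started at `x0`:
a probability measure with `X_0 = x0` a.s., and the Markov property with
transition probabilities `ω i (j - i)` from `i` to `j`. -/
def IsWalk {d : ℕ} (μ : Measure (Traj d)) (ω : Env d) (x0 : Zd d) : Prop :=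
  IsProbabilityMeasure μ ∧ μ {w | w 0 = x0} = 1 ∧
  ∀ (n : ℕ) (A : Set (Traj d)), MeasurableSet A →
    (∀ w w' : Traj d, (∀ m ≤ n, w m = w' m) → (w ∈ A ↔ w' ∈ A)) →
    ∀ i j : Zd d,
      μ (A ∩ {w | w n = i ∧ w (n + 1) = j}) =
        ENNReal.ofReal (ω i (j - i)) * μ (A ∩ {w | w n = i})

/-- a nice environment of range `M`: nonnegative transition probabilities of
total mass one, supported on jumps of sup-norm at most `M`. -/
def GoodEnv {d : ℕ} (M : ℕ) (ω : Env d) : Prop :=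
  (∀ x e, 0 ≤ ω x e) ∧ (∀ x, ∑ e ∈ box d M, ω x e = 1) ∧
  (∀ x e, e ∉ box d M → ω x e = 0)

/-- `U` is `M`-connected: there is a path of range `M` through all its points. -/
def MConn {d : ℕ} (M : ℕ) (U : Finset (Zd d)) : Prop :=
  ∃ (n : ℕ) (p : ℕ → Zd d), (∀ i ≤ n, p i ∈ U) ∧
    (∀ i < n, p (i + 1) - p i ∈ box d M) ∧ (∀ x ∈ U, ∃ i ≤ n, p i = x)

/-- `E^ω_{x0}[Σ_{j=0}^{T_U} 1(X_j = x)]`, the expected number of visits to `x`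
before exiting `U`. -/
def exitGreen {d : ℕ} (μ : Measure (Traj d)) (U : Set (Zd d)) (x : Zd d) : ℝ≥0∞ :=
  ∑' j : ℕ, μ {w | w j = x ∧ ∀ m < j, w m ∈ U}

/-- Kalikow's condition in direction `ℓ` with constant `ε`, for the annealed walk
with environment distribution `IP` and quenched laws `P ω` (started at `0`). -/
def KalikowCond {d : ℕ} (IP : Measure (Env d)) (P : Env d → Measure (Traj d))
    (M : ℕ) (ℓ : Fin d → ℝ) (ε : ℝ) : Prop :=
  0 < ε ∧ ∀ U : Finset (Zd d), (0 : Zd d) ∈ U → MConn M U → ∀ x ∈ U,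
    ε * ∫ ω, (exitGreen (P ω) (↑U) x).toReal ∂IP ≤
      ∫ ω, driftl M ℓ (shiftE x ω) * (exitGreen (P ω) (↑U) x).toReal ∂IP

/-- shift invariance of the environment measure. -/
def ShiftInv {d : ℕ} (IP : Measure (Env d)) : Prop :=
  ∀ k : Zd d, Measure.map (shiftE k) IP = IP

/-- ergodicity of the environment measure under the shifts. -/
def ErgEnv {d : ℕ} (IP : Measure (Env d)) : Prop :=
  ShiftInv IP ∧ ∀ S : Set (Env d), MeasurableSet S →
    (∀ k : Zd d, shiftE k ⁻¹' S = S) → IP S = 0 ∨ IP S = 1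

/-- invariance of a measure for the environment process viewed from the particle,
whose kernel is `π(ω, A) = Σ_{|e| ≤ M} π_{0e}(ω) 1_A(T^e ω)`. -/
def EnvInvariant {d : ℕ} (M : ℕ) (IPinf : Measure (Env d)) : Prop :=
  ∀ A : Set (Env d), MeasurableSet A →
    ∫⁻ ω, ∑ e ∈ box d M, ENNReal.ofReal (ω 0 e) * A.indicator 1 (shiftE e ω) ∂IPinf
      = IPinf A

/-- weak ellipticity in direction `ℓ`: a.s. `π_{0j} > 0` for all unit vectors `j`
with `j·ℓ ≥ 0`. -/
def WeakElliptic {d : ℕ} (IP : Measure (Env d)) (ℓ : Fin d → ℝ) : Prop :=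
  ∀ᵐ ω ∂IP, ∀ e : Zd d, (∑ i, (e i) * (e i)) = 1 → 0 ≤ dotl e ℓ → 0 < ω 0 e

/-- the half-space σ-field `S_k = σ(ω_x : x·ℓ ≥ k)`. -/
def Sfield {d : ℕ} (ℓ : Fin d → ℝ) (k : ℝ) : MeasurableSpace (Env d) :=
  ⨆ x ∈ {x : Zd d | k ≤ dotl x ℓ}, MeasurableSpace.comap (fun ω : Env d => ω x) inferInstance

lemma Sfield_le {d : ℕ} (ℓ : Fin d → ℝ) (k : ℝ) :
    Sfield ℓ k ≤ (inferInstance : MeasurableSpace (Env d)) := by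
  apply iSup₂_le
  intro x _
  exact (measurable_pi_apply x).comap_le

/-- the absolutely continuous part `IP_∞^{k,≪}` of `IP_∞` restricted to the
half-space σ-field `S_k`, relative to `IP` restricted to `S_k`. -/
def acPartOn {d : ℕ} (ℓ : Fin d → ℝ) (k : ℝ) (IP IPinf : Measure (Env d)) :
    @Measure (Env d) (Sfield ℓ k) :=
  (IP.trim (Sfield_le ℓ k)).withDensity
    ((IPinf.trim (Sfield_le ℓ k)).rnDeriv (IP.trim (Sfield_le ℓ k)))

open scoped Topology

/-!
Write `Π` for the transition operator of the environment process, `ρ_a = IP_∞^{a,≪}`, and `c`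
for a bound of `|e·ℓ|` over the jumps `e`, so that `Π` maps measures on `S_a` to measures on
`S_{a+c}`. Since `Π IP_∞ = IP_∞` and, by shift invariance of `IP`, `Π` preserves `IP`-null sets,
maximality of the absolutely continuous part gives `Π ρ_a ≤ ρ_{a+c}`; letting `a → -∞`,
`Π ν ≤ ν` on every `S_k`. Conversely `ρ_{a-c}(Ω) ≤ (Π ρ_a)(Ω)`, and `ρ_a → ν` in total mass
under the common bound `ρ_a ≤ IP_∞`, which integrates `π(·, Ω)`; so `Π ν` and `ν` have the same
total mass. The half-space sets generate and are closed under complements, hence `Π ν = ν`.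
-/

namespace MeasureTheory

variable {α : Type*} {m : MeasurableSpace α}

theorem Measure.exists_null_restrict_compl_le_withDensity_rnDeriv (μ ν : Measure α)
    [μ.HaveLebesgueDecomposition ν] :
    ∃ N, MeasurableSet N ∧ ν N = 0 ∧ μ.restrict Nᶜ ≤ ν.withDensity (μ.rnDeriv ν) := by
  obtain ⟨S, hS, hσS, hνS⟩ := mutuallySingular_singularPart μ ν
  refine ⟨Sᶜ, hS.compl, hνS, ?_⟩
  conv_lhs => rw [haveLebesgueDecomposition_add μ ν]
  rw [compl_compl, Measure.restrict_add, Measure.restrict_eq_zero.mpr hσS, zero_add]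
  exact Measure.restrict_le_self

theorem Measure.le_withDensity_rnDeriv {μ ν ξ : Measure α} [μ.HaveLebesgueDecomposition ν]
    (hξμ : ξ ≤ μ) (hξν : ξ ≪ ν) : ξ ≤ ν.withDensity (μ.rnDeriv ν) := by
  obtain ⟨N, hN, hνN, hle⟩ := exists_null_restrict_compl_le_withDensity_rnDeriv μ ν
  calc ξ = ξ.restrict Nᶜ := (Measure.restrict_eq_self_of_ae_mem
          (measure_eq_zero_iff_ae_notMem.mp (hξν hνN))).symm
    _ ≤ μ.restrict Nᶜ := Measure.restrict_mono le_rfl hξμ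
    _ ≤ _ := hle

theorem exists_lintegral_le_of_le_of_measure_univ_le {μ : Measure α} {f : α → ℝ≥0∞}
    (hf : Measurable f) (hμf : ∫⁻ x, f x ∂μ ≠ ∞) {ε : ℝ≥0∞} (hε : ε ≠ 0) :
    ∃ η > 0, ∀ δ ≤ μ, δ Set.univ ≤ η → ∫⁻ x, f x ∂δ ≤ ε := by
  have htail : Tendsto (fun n : ℕ => ∫⁻ x, f x - n ∂μ) atTop (𝓝 0) := by
    rw [← lintegral_zero]
    refine tendsto_lintegral_of_dominated_convergence f (fun n => hf.sub_const _)
      (fun n => .of_forall fun x => tsub_le_self) hμf ?_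
    filter_upwards [ae_lt_top hf hμf] with x hx
    obtain ⟨n₀, hn₀⟩ := ENNReal.exists_nat_gt hx.ne
    exact tendsto_atTop_of_eventually_const (i₀ := n₀) fun n hn =>
      tsub_eq_zero_of_le (hn₀.le.trans (by exact_mod_cast hn))
  obtain ⟨n, hn⟩ := (htail.eventually (ge_mem_nhds (ENNReal.half_pos hε))).exists
  refine ⟨ε / 2 / n, ENNReal.div_pos_iff.mpr ⟨(ENNReal.half_pos hε).ne', by simp⟩,
    fun δ hδ hδη => ?_⟩
  calc ∫⁻ x, f x ∂δ ≤ ∫⁻ x, n + (f x - n) ∂δ := lintegral_mono fun x => le_add_tsub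
    _ = n * δ Set.univ + ∫⁻ x, f x - n ∂δ := by
        rw [lintegral_add_left measurable_const, lintegral_const]
    _ ≤ n * (ε / 2 / n) + ∫⁻ x, f x - n ∂μ := by gcongr
    _ ≤ ε / 2 + ε / 2 := add_le_add ENNReal.mul_div_le hn
    _ = ε := ENNReal.add_halves ε

theorem Measure.trim_mono {m₀ : MeasurableSpace α} (hm : m ≤ m₀) {μ ν : Measure[m₀] α}
    (h : μ ≤ ν) : μ.trim hm ≤ ν.trim hm :=
  Measure.le_iff.mpr fun s hs => by
    rw [trim_measurableSet_eq hm hs, trim_measurableSet_eq hm hs]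
    exact Measure.le_iff'.mp h s

theorem Measure.ext_of_generate_of_le {C : Set (Set α)}
    (hgen : m = MeasurableSpace.generateFrom C)
    (hC : IsPiSystem C) (hcompl : ∀ s ∈ C, sᶜ ∈ C) {μ ν : Measure α} [IsFiniteMeasure ν]
    (hle : ∀ s ∈ C, μ s ≤ ν s) (huniv : μ Set.univ = ν Set.univ) : μ = ν := by
  have : IsFiniteMeasure μ := ⟨huniv ▸ measure_lt_top ν _⟩
  refine ext_of_generate_finite C hgen hC (fun s hs => (hle s hs).antisymm ?_) huniv
  have hsc : MeasurableSet sᶜ := by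
    rw [hgen]; exact MeasurableSpace.measurableSet_generateFrom (hcompl s hs)
  rw [← compl_compl s, measure_compl hsc (measure_ne_top ν _),
    measure_compl hsc (measure_ne_top μ _), huniv]
  exact tsub_le_tsub_left (hle _ (hcompl s hs)) _

end MeasureTheory

section Environment

variable {d : ℕ}

theorem dotl_add (x y : Zd d) (ℓ : Fin d → ℝ) : dotl (x + y) ℓ = dotl x ℓ + dotl y ℓ := by
  simp [dotl, add_mul, Finset.sum_add_distrib]

theorem dotl_neg (x : Zd d) (ℓ : Fin d → ℝ) : dotl (-x) ℓ = -dotl x ℓ := by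
  simp [dotl]

theorem exists_abs_dotl_le (M : ℕ) (ℓ : Fin d → ℝ) : ∃ m : ℕ, ∀ e ∈ box d M, |dotl e ℓ| ≤ m :=
  ⟨⌈∑ e ∈ box d M, |dotl e ℓ|⌉₊, fun _ he =>
    (Finset.single_le_sum (f := (|dotl · ℓ|)) (fun _ _ => abs_nonneg _) he).trans
      (Nat.le_ceil _)⟩

theorem measurable_apply_Sfield {ℓ : Fin d → ℝ} {a : ℝ} {x : Zd d} (hx : a ≤ dotl x ℓ) :
    Measurable[Sfield ℓ a] fun ω : Env d => ω x :=
  measurable_iff_comap_le.mpr <| le_iSup₂ (f := fun y (_ : y ∈ {y : Zd d | a ≤ dotl y ℓ}) =>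
    MeasurableSpace.comap (fun ω : Env d => ω y) inferInstance) x hx

theorem Sfield_mono (ℓ : Fin d → ℝ) {a b : ℝ} (h : a ≤ b) : Sfield ℓ b ≤ Sfield ℓ a :=
  iSup₂_le fun _ hx => (measurable_apply_Sfield (h.trans hx)).comap_le

theorem measurable_shiftE (e : Zd d) : Measurable (shiftE e) :=
  measurable_pi_lambda _ fun x => measurable_pi_apply (e + x)

theorem measurable_shiftE_Sfield {ℓ : Fin d → ℝ} {a b : ℝ} {e : Zd d} (h : a ≤ b + dotl e ℓ) :
    Measurable[Sfield ℓ a, Sfield ℓ b] (shiftE e) := by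
  rw [measurable_iff_comap_le, Sfield]
  simp_rw [MeasurableSpace.comap_iSup, MeasurableSpace.comap_comp]
  refine iSup₂_le fun x hx => (measurable_apply_Sfield (x := e + x) ?_).comap_le
  rw [dotl_add]
  linarith [show b ≤ dotl x ℓ from hx]

@[simp]
theorem shiftE_neg_shiftE (e : Zd d) (ω : Env d) : shiftE (-e) (shiftE e ω) = ω := by
  funext x y
  simp [shiftE]

theorem ShiftInv.measure_preimage {IP : Measure (Env d)} (h : ShiftInv IP) (e : Zd d)
    {A : Set (Env d)} (hA : MeasurableSet A) : IP (shiftE e ⁻¹' A) = IP A := by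
  rw [← Measure.map_apply (measurable_shiftE e) hA, h e]

end Environment

section Kernel

variable {d : ℕ} (M : ℕ)

def envKernel (ω : Env d) (A : Set (Env d)) : ℝ≥0∞ :=
  ∑ e ∈ box d M, ENNReal.ofReal (ω 0 e) * A.indicator 1 (shiftE e ω)

/-- `Π μ`, the law of `T^{X_1} ω` when `ω ∼ μ`, as a measure for the σ-algebra `m₂`. -/
def envKernelMap {m₁ : MeasurableSpace (Env d)} (m₂ : MeasurableSpace (Env d))
    (μ : Measure[m₁] (Env d)) : Measure[m₂] (Env d) :=
  ∑ e ∈ box d M, @Measure.map _ _ m₁ m₂ (shiftE e) (μ.withDensity fun ω => ENNReal.ofReal (ω 0 e))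

variable {M}

theorem envKernel_mono (ω : Env d) {A B : Set (Env d)} (h : A ⊆ B) :
    envKernel M ω A ≤ envKernel M ω B :=
  Finset.sum_le_sum fun _ _ => by gcongr

theorem envKernel_univ (ω : Env d) :
    envKernel M ω Set.univ = ∑ e ∈ box d M, ENNReal.ofReal (ω 0 e) := by
  simp [envKernel]

theorem EnvInvariant.lintegral_envKernel {μ : Measure (Env d)} (h : EnvInvariant M μ)
    {A : Set (Env d)} (hA : MeasurableSet A) : ∫⁻ ω, envKernel M ω A ∂μ = μ A :=
  h A hA

theorem EnvInvariant.smul {μ : Measure (Env d)} (h : EnvInvariant M μ) (c : ℝ≥0∞) :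
    EnvInvariant M (c • μ) := fun A hA => by
  rw [lintegral_smul_measure, h A hA, Measure.smul_apply]

theorem measurable_envKernel_univ {m : MeasurableSpace (Env d)}
    (h₀ : Measurable[m] fun ω : Env d => ω 0) : Measurable[m] fun ω => envKernel M ω Set.univ := by
  simp_rw [envKernel_univ]
  exact Finset.measurable_sum _ fun e _ =>
    ENNReal.measurable_ofReal.comp ((measurable_pi_apply e).comp h₀)

variable {m₁ m₂ : MeasurableSpace (Env d)}

theorem measurable_envKernel_summand (h₀ : Measurable[m₁] fun ω : Env d => ω 0) {e : Zd d}
    (he : Measurable[m₁, m₂] (shiftE e)) {A : Set (Env d)} (hA : MeasurableSet[m₂] A) :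
    Measurable[m₁] fun ω : Env d => ENNReal.ofReal (ω 0 e) * A.indicator 1 (shiftE e ω) :=
  (ENNReal.measurable_ofReal.comp ((measurable_pi_apply e).comp h₀)).mul
    ((measurable_const.indicator hA).comp he)

theorem measurable_envKernel (h₀ : Measurable[m₁] fun ω : Env d => ω 0)
    (hshift : ∀ e ∈ box d M, Measurable[m₁, m₂] (shiftE e)) {A : Set (Env d)}
    (hA : MeasurableSet[m₂] A) :
    Measurable[m₁] fun ω => envKernel M ω A :=
  Finset.measurable_sum _ fun e he => measurable_envKernel_summand h₀ (hshift e he) hA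

theorem envKernelMap_apply (h₀ : Measurable[m₁] fun ω : Env d => ω 0)
    (hshift : ∀ e ∈ box d M, Measurable[m₁, m₂] (shiftE e)) (μ : Measure[m₁] (Env d))
    {A : Set (Env d)} (hA : MeasurableSet[m₂] A) :
    envKernelMap M m₂ μ A = ∫⁻ ω, envKernel M ω A ∂μ := by
  unfold envKernelMap envKernel
  rw [Measure.finsetSum_apply, lintegral_finsetSum _ fun e he =>
    measurable_envKernel_summand h₀ (hshift e he) hA]
  refine Finset.sum_congr rfl fun e he => ?_
  rw [@Measure.map_apply _ _ m₁ m₂ _ _ (hshift e he) _ hA, withDensity_apply _ (hshift e he hA),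
    ← lintegral_indicator (hshift e he hA)]
  congr 1
  ext ω
  by_cases hω : shiftE e ω ∈ A <;> simp [hω]

end Kernel

section AcPart

variable {d M : ℕ} {ℓ : Fin d → ℝ} {IP IPinf : Measure (Env d)}

theorem acPartOn_le_trim (a : ℝ) :
    acPartOn ℓ a IP IPinf ≤ IPinf.trim (Sfield_le ℓ a) :=
  Measure.withDensity_rnDeriv_le _ _

theorem acPartOn_eq_zero {a : ℝ} {A : Set (Env d)} (hA : MeasurableSet[Sfield ℓ a] A)
    (h : IP A = 0) : acPartOn ℓ a IP IPinf A = 0 :=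
  withDensity_absolutelyContinuous _ _ (by rwa [trim_measurableSet_eq _ hA])

theorem le_acPartOn [IsFiniteMeasure IP] [IsFiniteMeasure IPinf] {a : ℝ}
    {ξ : Measure[Sfield ℓ a] (Env d)} (hξ : ξ ≤ IPinf.trim (Sfield_le ℓ a))
    (hξIP : ξ ≪ IP.trim (Sfield_le ℓ a)) : ξ ≤ acPartOn ℓ a IP IPinf :=
  Measure.le_withDensity_rnDeriv hξ hξIP

theorem measurable_apply_zero_Sfield {a : ℝ} (ha : a ≤ 0) :
    Measurable[Sfield ℓ a] fun ω : Env d => ω 0 :=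
  measurable_apply_Sfield (by simpa [dotl] using ha)

theorem lintegral_envKernel_acPartOn_le [IsFiniteMeasure IP] [IsFiniteMeasure IPinf]
    (hsh : ShiftInv IP) (hinv : EnvInvariant M IPinf) {a b : ℝ} (ha : a ≤ 0)
    (hab : ∀ e ∈ box d M, a ≤ b + dotl e ℓ) {A : Set (Env d)} (hA : MeasurableSet[Sfield ℓ b] A) :
    ∫⁻ ω, envKernel M ω A ∂(acPartOn ℓ a IP IPinf) ≤ acPartOn ℓ b IP IPinf A := by
  have h₀ := measurable_apply_zero_Sfield (ℓ := ℓ) ha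
  have hshift : ∀ e ∈ box d M, Measurable[Sfield ℓ a, Sfield ℓ b] (shiftE e) :=
    fun e he => measurable_shiftE_Sfield (hab e he)
  rw [← envKernelMap_apply h₀ hshift _ hA]
  have hle : envKernelMap M (Sfield ℓ b) (acPartOn ℓ a IP IPinf) ≤ IPinf.trim (Sfield_le ℓ b) := by
    refine Measure.le_iff.mpr fun B hB => ?_
    rw [envKernelMap_apply h₀ hshift _ hB, trim_measurableSet_eq _ hB,
      ← hinv.lintegral_envKernel (Sfield_le ℓ b B hB),
      ← lintegral_trim (Sfield_le ℓ a) (measurable_envKernel h₀ hshift hB)]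
    exact lintegral_mono' (acPartOn_le_trim a) le_rfl
  refine Measure.le_iff'.mp (le_acPartOn hle
    (Measure.AbsolutelyContinuous.mk fun B hB hB0 => ?_)) A
  rw [trim_measurableSet_eq _ hB] at hB0
  rw [envKernelMap, Measure.finsetSum_apply]
  refine Finset.sum_eq_zero fun e he => ?_
  rw [@Measure.map_apply _ _ _ _ _ _ (hshift e he) _ hB]
  refine withDensity_absolutelyContinuous _ _ (acPartOn_eq_zero (hshift e he hB) ?_)
  rwa [hsh.measure_preimage e (Sfield_le ℓ b B hB)]

theorem acPartOn_univ_le_lintegral_envKernel [IsFiniteMeasure IP] [IsFiniteMeasure IPinf]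
    (hsh : ShiftInv IP) (hinv : EnvInvariant M IPinf) {a b : ℝ} (ha : a ≤ 0)
    (hba : ∀ e ∈ box d M, b ≤ a - dotl e ℓ) :
    acPartOn ℓ b IP IPinf Set.univ ≤ ∫⁻ ω, envKernel M ω Set.univ ∂(acPartOn ℓ a IP IPinf) := by
  obtain ⟨N, hN, hIPN, hIPinfN⟩ := Measure.exists_null_restrict_compl_le_withDensity_rnDeriv
    (IPinf.trim (Sfield_le ℓ a)) (IP.trim (Sfield_le ℓ a))
  rw [trim_measurableSet_eq _ hN] at hIPN
  set C := ⋃ e ∈ box d M, shiftE (-e) ⁻¹' N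
  have hC : MeasurableSet[Sfield ℓ b] C := Finset.measurableSet_biUnion _ fun e he =>
    measurable_shiftE_Sfield (by rw [dotl_neg]; linarith [hba e he]) hN
  have hIPC : IP C = 0 := (measure_biUnion_null_iff (box d M).countable_toSet).mpr fun e _ => by
    rwa [hsh.measure_preimage _ (Sfield_le ℓ a N hN)]
  -- from `ω ∈ N` every jump lands in `C`, so `π(ω, Cᶜ) = 0` there
  have hvanish : ∀ ω, envKernel M ω Cᶜ ≤ Nᶜ.indicator (fun ω => envKernel M ω Set.univ) ω := by
    intro ω
    by_cases hω : ω ∈ N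
    · have : envKernel M ω Cᶜ = 0 := Finset.sum_eq_zero fun e he => by
        have : shiftE e ω ∈ C := Set.mem_biUnion he (by simpa using hω)
        simp [this]
      simp [this]
    · rw [Set.indicator_of_mem hω]
      exact envKernel_mono ω (Set.subset_univ _)
  have hmeas := (measurable_envKernel_univ (M := M) (measurable_apply_zero_Sfield ha)).indicator
    hN.compl
  calc acPartOn ℓ b IP IPinf Set.univ = acPartOn ℓ b IP IPinf Cᶜ := by
        rw [← measure_add_measure_compl hC, acPartOn_eq_zero hC hIPC, zero_add]
    _ ≤ IPinf Cᶜ :=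
        (acPartOn_le_trim b Cᶜ).trans_eq (trim_measurableSet_eq _ hC.compl)
    _ = ∫⁻ ω, envKernel M ω Cᶜ ∂IPinf := (hinv.lintegral_envKernel (Sfield_le ℓ b _ hC.compl)).symm
    _ ≤ ∫⁻ ω, Nᶜ.indicator (fun ω => envKernel M ω Set.univ) ω ∂IPinf := lintegral_mono hvanish
    _ = ∫⁻ ω, envKernel M ω Set.univ ∂(IPinf.trim (Sfield_le ℓ a)).restrict Nᶜ := by
        rw [← lintegral_trim (Sfield_le ℓ a) hmeas, lintegral_indicator hN.compl]
    _ ≤ ∫⁻ ω, envKernel M ω Set.univ ∂(acPartOn ℓ a IP IPinf) := lintegral_mono' hIPinfN le_rfl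

end AcPart

section AcPartLimit

variable {d M : ℕ} {ℓ : Fin d → ℝ} {IP IPinf ν : Measure (Env d)}

/-- `ν` is the measure `IP_∞^{∞,≪}`. -/
def IsAcPartLimit (ℓ : Fin d → ℝ) (IP IPinf ν : Measure (Env d)) : Prop :=
  ∀ k : ℤ, k ≤ 0 → ∀ A : Set (Env d), MeasurableSet[Sfield ℓ (k : ℝ)] A →
    ν A = ⨅ j : {j : ℤ // j ≤ k}, acPartOn ℓ (j : ℝ) IP IPinf A

def halfSpaceSets (ℓ : Fin d → ℝ) : Set (Set (Env d)) :=
  {A | ∃ k : ℤ, k ≤ 0 ∧ MeasurableSet[Sfield ℓ (k : ℝ)] A}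

theorem isPiSystem_halfSpaceSets : IsPiSystem (halfSpaceSets (d := d) ℓ) := by
  rintro A ⟨k₁, hk₁, hA⟩ B ⟨k₂, -, hB⟩ -
  refine ⟨min k₁ k₂, (min_le_left _ _).trans hk₁, ?_⟩
  exact (Sfield_mono ℓ (by exact_mod_cast min_le_left k₁ k₂) A hA).inter
    (Sfield_mono ℓ (by exact_mod_cast min_le_right k₁ k₂) B hB)

theorem generateFrom_halfSpaceSets :
    (inferInstance : MeasurableSpace (Env d)) = MeasurableSpace.generateFrom (halfSpaceSets ℓ) := by
  refine le_antisymm (iSup_le fun x => ?_)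
    (MeasurableSpace.generateFrom_le fun A ⟨k, _, hA⟩ => Sfield_le ℓ k A hA)
  have hk : ((min ⌊dotl x ℓ⌋ 0 : ℤ) : ℝ) ≤ dotl x ℓ :=
    (Int.cast_le.mpr (min_le_left _ _)).trans (Int.floor_le _)
  exact (measurable_apply_Sfield hk).comap_le.trans fun A hA =>
    MeasurableSpace.measurableSet_generateFrom ⟨_, min_le_right _ _, hA⟩

namespace IsAcPartLimit

theorem trim_le (hν : IsAcPartLimit ℓ IP IPinf ν) {j : ℤ} (hj : j ≤ 0) :
    ν.trim (Sfield_le ℓ j) ≤ acPartOn ℓ j IP IPinf := by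
  refine Measure.le_iff.mpr fun B hB => ?_
  rw [trim_measurableSet_eq _ hB, hν j hj B hB]
  exact iInf_le (fun i : {i : ℤ // i ≤ j} => acPartOn ℓ i IP IPinf B) ⟨j, le_rfl⟩

theorem measure_eq_zero (hν : IsAcPartLimit ℓ IP IPinf ν) {k : ℤ} (hk : k ≤ 0)
    {A : Set (Env d)} (hA : MeasurableSet[Sfield ℓ k] A) (h : IP A = 0) : ν A = 0 := by
  rw [← trim_measurableSet_eq (Sfield_le ℓ k) hA]
  exact le_zero_iff.mp ((Measure.le_iff'.mp (hν.trim_le hk) A).trans_eq (acPartOn_eq_zero hA h))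

variable [IsFiniteMeasure IP] [IsFiniteMeasure IPinf]

theorem lintegral_envKernel_le (hν : IsAcPartLimit ℓ IP IPinf ν) (hsh : ShiftInv IP)
    (hinv : EnvInvariant M IPinf) {k : ℤ} (hk : k ≤ 0) {A : Set (Env d)}
    (hA : MeasurableSet[Sfield ℓ k] A) : ∫⁻ ω, envKernel M ω A ∂ν ≤ ν A := by
  obtain ⟨m, hm⟩ := exists_abs_dotl_le M ℓ
  rw [hν k hk A hA]
  refine le_iInf fun ⟨j, hjk⟩ => ?_
  have hj : j - m ≤ 0 := by omega
  have hlevel : ∀ e ∈ box d M, ((j - m : ℤ) : ℝ) ≤ j + dotl e ℓ := fun e he => by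
    push_cast
    linarith [(abs_le.mp (hm e he)).1]
  have hAj : MeasurableSet[Sfield ℓ j] A := Sfield_mono ℓ (by exact_mod_cast hjk) A hA
  have h₀ := measurable_apply_zero_Sfield (ℓ := ℓ) (a := (j - m : ℤ)) (by exact_mod_cast hj)
  calc ∫⁻ ω, envKernel M ω A ∂ν
      = ∫⁻ ω, envKernel M ω A ∂(ν.trim (Sfield_le ℓ (j - m : ℤ))) :=
        (lintegral_trim _ (measurable_envKernel h₀
          (fun e he => measurable_shiftE_Sfield (hlevel e he)) hAj)).symm
    _ ≤ ∫⁻ ω, envKernel M ω A ∂(acPartOn ℓ (j - m : ℤ) IP IPinf) :=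
        lintegral_mono' (hν.trim_le hj) le_rfl
    _ ≤ acPartOn ℓ j IP IPinf A :=
        lintegral_envKernel_acPartOn_le hsh hinv (by exact_mod_cast hj) hlevel hAj

theorem measure_univ_le_lintegral_acPartOn (hν : IsAcPartLimit ℓ IP IPinf ν) (hsh : ShiftInv IP)
    (hinv : EnvInvariant M IPinf) {j : ℤ} (hj : j ≤ 0) :
    ν Set.univ ≤ ∫⁻ ω, envKernel M ω Set.univ ∂(acPartOn ℓ j IP IPinf) := by
  obtain ⟨m, hm⟩ := exists_abs_dotl_le M ℓ
  calc ν Set.univ = ν.trim (Sfield_le ℓ (j - m : ℤ)) Set.univ :=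
        (trim_measurableSet_eq _ MeasurableSet.univ).symm
    _ ≤ acPartOn ℓ (j - m : ℤ) IP IPinf Set.univ :=
        Measure.le_iff'.mp (hν.trim_le (by omega)) _
    _ ≤ _ := acPartOn_univ_le_lintegral_envKernel hsh hinv (by exact_mod_cast hj) fun e he => by
        push_cast
        linarith [(abs_le.mp (hm e he)).2]

theorem measure_univ_le_lintegral_envKernel [IsFiniteMeasure ν] (hν : IsAcPartLimit ℓ IP IPinf ν)
    (hsh : ShiftInv IP) (hinv : EnvInvariant M IPinf) :
    ν Set.univ ≤ ∫⁻ ω, envKernel M ω Set.univ ∂ν := by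
  have h₀₀ : ((0 : ℤ) : ℝ) ≤ 0 := by simp
  have hs := measurable_envKernel_univ (M := M) (measurable_apply_zero_Sfield (ℓ := ℓ) h₀₀)
  have hfin : ∫⁻ ω, envKernel M ω Set.univ ∂(IPinf.trim (Sfield_le ℓ (0 : ℤ))) ≠ ∞ := by
    rw [lintegral_trim _ hs, hinv.lintegral_envKernel MeasurableSet.univ]
    exact measure_ne_top _ _
  refine ENNReal.le_of_forall_pos_le_add fun ε hε _ => ?_
  obtain ⟨η, hη, hsmall⟩ :=
    exists_lintegral_le_of_le_of_measure_univ_le hs hfin (ε := ε) (by exact_mod_cast hε.ne')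
  obtain ⟨⟨j, hj⟩, hjη⟩ :
      ∃ j : {j : ℤ // j ≤ 0}, acPartOn ℓ j IP IPinf Set.univ < ν Set.univ + η := by
    rw [← iInf_lt_iff, ← hν 0 le_rfl Set.univ MeasurableSet.univ]
    exact ENNReal.lt_add_right (measure_ne_top _ _) hη.ne'
  have h0j : Sfield ℓ ((0 : ℤ) : ℝ) ≤ Sfield ℓ j := Sfield_mono ℓ (by exact_mod_cast hj)
  set ρ := (acPartOn ℓ j IP IPinf).trim h0j
  set ν₀ := ν.trim (Sfield_le ℓ (0 : ℤ))
  have hνρ : ν₀ ≤ ρ := trim_trim.symm.trans_le (Measure.trim_mono h0j (hν.trim_le hj))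
  have hρ : ρ ≤ IPinf.trim (Sfield_le ℓ (0 : ℤ)) :=
    (Measure.trim_mono h0j (acPartOn_le_trim j)).trans_eq trim_trim
  have hgap : (ρ - ν₀) Set.univ ≤ η := by
    rw [Measure.sub_apply MeasurableSet.univ hνρ, trim_measurableSet_eq _ MeasurableSet.univ,
      trim_measurableSet_eq _ MeasurableSet.univ, tsub_le_iff_left]
    exact hjη.le
  calc ν Set.univ ≤ ∫⁻ ω, envKernel M ω Set.univ ∂(acPartOn ℓ j IP IPinf) :=
        hν.measure_univ_le_lintegral_acPartOn hsh hinv hj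
    _ = ∫⁻ ω, envKernel M ω Set.univ ∂(ρ - ν₀ + ν₀) := by
        rw [Measure.sub_add_cancel_of_le hνρ, lintegral_trim _ hs]
    _ ≤ ∫⁻ ω, envKernel M ω Set.univ ∂ν + ε := by
        rw [lintegral_add_measure, lintegral_trim _ hs, add_comm]
        gcongr
        exact hsmall _ (Measure.sub_le.trans hρ) hgap

theorem envInvariant [IsFiniteMeasure ν] (hν : IsAcPartLimit ℓ IP IPinf ν) (hsh : ShiftInv IP)
    (hinv : EnvInvariant M IPinf) : EnvInvariant M ν := by
  have h₀ : Measurable fun ω : Env d => ω 0 := measurable_pi_apply 0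
  have hshift : ∀ e ∈ box d M, Measurable (shiftE e) := fun e _ => measurable_shiftE e
  have hfix : envKernelMap M inferInstance ν = ν := by
    refine Measure.ext_of_generate_of_le (generateFrom_halfSpaceSets (ℓ := ℓ))
      isPiSystem_halfSpaceSets (fun A ⟨k, hk, hA⟩ => ⟨k, hk, hA.compl⟩) ?_ ?_
    · rintro A ⟨k, hk, hA⟩
      rw [envKernelMap_apply h₀ hshift ν (Sfield_le ℓ k A hA)]
      exact hν.lintegral_envKernel_le hsh hinv hk hA
    · rw [envKernelMap_apply h₀ hshift ν MeasurableSet.univ]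
      exact le_antisymm (hν.lintegral_envKernel_le hsh hinv le_rfl MeasurableSet.univ)
        (hν.measure_univ_le_lintegral_envKernel hsh hinv)
  exact fun A hA => (envKernelMap_apply h₀ hshift ν hA).symm.trans (by rw [hfix])

end IsAcPartLimit

end AcPartLimit

/-- if `IP_∞` is invariant for the environment process and the
measure `IP_∞^{∞,≪}`, defined on each `S_k` as the decreasing limit (infimum) of
the absolutely continuous parts `IP_∞^{j,≪}`, has positive total mass, then its
normalization is an invariant probability measure for the environment process,
absolutely continuous w.r.t. `IP` on every half-space σ-field `S_k`, `k ≤ 0`. -/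
theorem ac_part_invariant {d M : ℕ} (ℓ : Fin d → ℝ)
    (IP : Measure (Env d)) [IsProbabilityMeasure IP] (hsh : ShiftInv IP)
    (IPinf : Measure (Env d)) [IsProbabilityMeasure IPinf]
    (hinv : EnvInvariant M IPinf)
    (ν : Measure (Env d)) [IsFiniteMeasure ν]
    (hν : ∀ k : ℤ, k ≤ 0 → ∀ A : Set (Env d), MeasurableSet[Sfield ℓ (k : ℝ)] A →
      ν A = ⨅ j : {j : ℤ // j ≤ k}, acPartOn ℓ (j : ℝ) IP IPinf A)
    (hpos : 0 < ν Set.univ) :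
    IsProbabilityMeasure ((ν Set.univ)⁻¹ • ν) ∧
    EnvInvariant M ((ν Set.univ)⁻¹ • ν) ∧
    ∀ k : ℤ, k ≤ 0 → ∀ A : Set (Env d), MeasurableSet[Sfield ℓ (k : ℝ)] A →
      IP A = 0 → ((ν Set.univ)⁻¹ • ν) A = 0 := by
  refine ⟨⟨?_⟩, (IsAcPartLimit.envInvariant hν hsh hinv).smul _, fun k hk A hA hIPA => ?_⟩
  · rw [Measure.smul_apply, smul_eq_mul, ENNReal.inv_mul_cancel hpos.ne' (measure_ne_top ν _)]
  · rw [Measure.smul_apply, IsAcPartLimit.measure_eq_zero hν hk hA hIPA, smul_zero]
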